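/- arXiv:1907.10536 — 2 statements merged into one kernel-verified Lean document; each statement's English description precedes it below -/
import Mathlib

section
/- Let x be a solution trajectory of (DIN-AVD)_{α,β,b} with α ≥ 1. Suppose the growth conditions (G2): b(t) > β'(t) + β(t)/t for all t ≥ t₀, and (G3): t·w'(t) ≤ (α−3)·w(t) for all t ≥ t₀ hold, where w(t) := b(t) − β'(t) − β(t)/t. Then ∫_{t₀}^{∞} t² β(t) w(t) ‖∇f(x(t))‖² dt < +∞. -/
/-!
Along the trajectory consider the energy
`E(t) = t² w(t) (f(x t) - f x⋆) + ½ ‖(α - 1)(x t - x⋆) + t (ẋ t + β(t) ∇f(x t))‖²`.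
The equation makes the anchored velocity inside the norm have derivative `-t w(t) ∇f(x t)`,
so that `Ė(t) + t² β(t) w(t) ‖∇f(x t)‖² = (2t w + t² ẇ)(f(x t) - f x⋆) - (α - 1) t w ⟪x t - x⋆, ∇f(x t)⟫`,
which is `≤ 0` by the convexity inequality `f(x t) - f x⋆ ≤ ⟪x t - x⋆, ∇f(x t)⟫` and (G3).
Since `E ≥ 0` by (G2), integrating gives `∫_{t₀}^s t² β w ‖∇f(x t)‖² ≤ E(t₀)` for every `s`.
-/

open Real Set MeasureTheory Filter

open scoped RealInnerProductSpace

theorem ContDiff.gradient {H : Type*} [NormedAddCommGroup H] [InnerProductSpace ℝ H]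
    [CompleteSpace H] {f : H → ℝ} {m n : WithTop ℕ∞} (hf : ContDiff ℝ n f) (hmn : m + 1 ≤ n) :
    ContDiff ℝ m (gradient f) :=
  (InnerProductSpace.toDual ℝ H).symm.contDiff.comp (hf.fderiv_right hmn)

theorem ConvexOn.fderiv_apply_sub_le {E : Type*} [NormedAddCommGroup E] [NormedSpace ℝ E]
    {f : E → ℝ} (hconv : ConvexOn ℝ univ f) {p : E} (hf : DifferentiableAt ℝ f p) (q : E) :
    fderiv ℝ f p (q - p) ≤ f q - f p := by
  have hline : HasDerivAt (fun s : ℝ => p + s • (q - p)) (q - p) 0 := by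
    simpa using ((hasDerivAt_id (0 : ℝ)).smul_const (q - p)).const_add p
  have hderiv : HasDerivAt (fun s : ℝ => f (p + s • (q - p))) (fderiv ℝ f p (q - p)) 0 := by
    refine HasFDerivAt.comp_hasDerivAt (f := fun s : ℝ => p + s • (q - p)) 0 ?_ hline
    simpa using hf.hasFDerivAt
  have hconv_line : ConvexOn ℝ univ fun s : ℝ => f (p + s • (q - p)) := by
    simpa [Function.comp_def, AffineMap.lineMap_apply, add_comm]
      using hconv.comp_affineMap (AffineMap.lineMap p q)
  simpa [slope_def_field] using
    hconv_line.le_slope_of_hasDerivAt (mem_univ 0) (mem_univ 1) zero_lt_one hderiv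

theorem integrableOn_Ici_of_deriv_le_neg {E g : ℝ → ℝ} {a : ℝ}
    (hE : ∀ t ≥ a, DifferentiableAt ℝ E t) (hE₀ : ∀ t ≥ a, 0 ≤ E t)
    (hg : ContinuousOn g (Ici a)) (hg₀ : ∀ t ≥ a, 0 ≤ g t) (hEg : ∀ t ≥ a, deriv E t ≤ -g t) :
    IntegrableOn g (Ici a) := by
  have hg_Icc : ∀ s, IntegrableOn g (Icc a s) := fun s =>
    (hg.mono Icc_subset_Ici_self).integrableOn_Icc
  have hbound : ∀ s ≥ a, ∫ t in a..s, g t ≤ E a := by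
    intro s hs
    have hsub : ∫ t in a..s, g t ≤ -E s - -E a :=
      intervalIntegral.integral_le_sub_of_hasDeriv_right_of_le hs
        (fun t ht => (hE t ht.1).continuousAt.continuousWithinAt.neg)
        (fun t ht => (hE t ht.1.le).hasDerivAt.neg.hasDerivWithinAt) (hg_Icc s)
        (fun t ht => le_neg.mpr (hEg t ht.1.le))
    linarith [hE₀ s hs]
  rw [integrableOn_Ici_iff_integrableOn_Ioi]
  refine integrableOn_Ioi_of_intervalIntegral_norm_bounded (E a) a
    (fun s => (hg_Icc s).mono_set Ioc_subset_Icc_self) tendsto_id ?_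
  filter_upwards [eventually_ge_atTop a] with s hs
  calc ∫ t in a..s, ‖g t‖ = ∫ t in a..s, g t :=
        intervalIntegral.integral_congr fun t ht =>
          Real.norm_of_nonneg (hg₀ t (by rw [uIcc_of_le hs] at ht; exact ht.1))
    _ ≤ E a := hbound s hs

noncomputable section DINAVD

variable {H : Type*} [NormedAddCommGroup H] [InnerProductSpace ℝ H] [CompleteSpace H]

def dinavdAnchor (f : H → ℝ) (xstar : H) (α : ℝ) (β : ℝ → ℝ) (x x' : ℝ → H) (t : ℝ) : H :=
  (α - 1) • (x t - xstar) + t • (x' t + β t • gradient f (x t))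

def dinavdEnergy (f : H → ℝ) (xstar : H) (α : ℝ) (β w : ℝ → ℝ) (x x' : ℝ → H) (t : ℝ) : ℝ :=
  t ^ 2 * w t * (f (x t) - f xstar) + ‖dinavdAnchor f xstar α β x x' t‖ ^ 2 / 2

theorem dinavd_dissipation_le {f : H → ℝ} {xstar p : H} {t α w w' : ℝ} (hconv : ConvexOn ℝ univ f)
    (hf : DifferentiableAt ℝ f p) (hmin : f xstar ≤ f p) (ht : 0 ≤ t) (hw : 0 ≤ w) (hα : 1 ≤ α)
    (hG3 : t * w' ≤ (α - 3) * w) :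
    (2 * t * w + t ^ 2 * w') * (f p - f xstar) ≤ (α - 1) * t * w * ⟪p - xstar, gradient f p⟫ := by
  have hsupport : f p - f xstar ≤ ⟪p - xstar, gradient f p⟫ := by
    have := hconv.fderiv_apply_sub_le hf xstar
    rw [← inner_gradient_left, ← neg_sub, inner_neg_right, real_inner_comm] at this
    linarith
  have hF : 0 ≤ f p - f xstar := sub_nonneg.mpr hmin
  nlinarith [mul_le_mul_of_nonneg_right hG3 (mul_nonneg ht hF),
    mul_le_mul_of_nonneg_left hsupport (mul_nonneg (mul_nonneg (sub_nonneg.mpr hα) ht) hw)]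

variable {f : H → ℝ} {xstar : H} {α t β' b w' : ℝ} {β w : ℝ → ℝ} {x x' : ℝ → H} {x'' : H}

theorem hasDerivAt_dinavdAnchor (ht : t ≠ 0) (hβ : HasDerivAt β β' t)
    (hx : HasDerivAt x (x' t) t) (hx' : HasDerivAt x' x'' t)
    (hgrad : DifferentiableAt ℝ (gradient f) (x t))
    (hode : x'' + (α / t) • x' t + β t • fderiv ℝ (gradient f) (x t) (x' t)
      + b • gradient f (x t) = 0)
    (hw : w t = b - β' - β t / t) :
    HasDerivAt (dinavdAnchor f xstar α β x x') (-(t * w t) • gradient f (x t)) t := by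
  have hG : HasDerivAt (fun s => gradient f (x s)) (fderiv ℝ (gradient f) (x t) (x' t)) t :=
    hgrad.hasFDerivAt.comp_hasDerivAt t hx
  have hx'' : x'' = -((α / t) • x' t) - β t • fderiv ℝ (gradient f) (x t) (x' t)
      - b • gradient f (x t) := by
    linear_combination (norm := module) hode
  refine (((hx.sub_const xstar).const_smul (α - 1)).add
    ((hasDerivAt_id t).smul (hx'.add (hβ.smul hG)))).congr_deriv ?_
  rw [hx'', hw]
  simp only [Pi.add_apply, Pi.smul_apply', id_eq, one_smul]
  match_scalars <;> field_simp <;> ring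

theorem hasDerivAt_dinavdEnergy (ht : t ≠ 0) (hβ : HasDerivAt β β' t) (hw' : HasDerivAt w w' t)
    (hx : HasDerivAt x (x' t) t) (hx' : HasDerivAt x' x'' t)
    (hf : DifferentiableAt ℝ f (x t)) (hgrad : DifferentiableAt ℝ (gradient f) (x t))
    (hode : x'' + (α / t) • x' t + β t • fderiv ℝ (gradient f) (x t) (x' t)
      + b • gradient f (x t) = 0)
    (hw : w t = b - β' - β t / t) :
    HasDerivAt (dinavdEnergy f xstar α β w x x')
      ((2 * t * w t + t ^ 2 * w') * (f (x t) - f xstar)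
        - (α - 1) * t * w t * ⟪x t - xstar, gradient f (x t)⟫
        - t ^ 2 * β t * w t * ‖gradient f (x t)‖ ^ 2) t := by
  have hF : HasDerivAt (fun s => f (x s) - f xstar) ⟪gradient f (x t), x' t⟫ t := by
    simpa using (hf.hasGradientAt.hasFDerivAt.comp_hasDerivAt t hx).sub_const (f xstar)
  have hv := hasDerivAt_dinavdAnchor (xstar := xstar) ht hβ hx hx' hgrad hode hw
  refine ((((hasDerivAt_pow 2 t).mul hw').mul hF).add (hv.norm_sq.div_const 2)).congr_deriv ?_
  simp only [dinavdAnchor, Pi.mul_apply, inner_add_left, real_inner_smul_left,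
    real_inner_smul_right, real_inner_self_eq_norm_sq, real_inner_comm (x' t)]
  ring

theorem dinavdEnergy_nonneg (hmin : f xstar ≤ f (x t)) (hw : 0 ≤ w t) :
    0 ≤ dinavdEnergy f xstar α β w x x' t := by
  unfold dinavdEnergy
  have := sub_nonneg.mpr hmin
  positivity

end DINAVD

theorem dinavd_gradient_integrability_general
    {H : Type*} [NormedAddCommGroup H] [InnerProductSpace ℝ H] [CompleteSpace H]
    (f : H → ℝ) (hf : ContDiff ℝ 2 f) (hconv : ConvexOn ℝ Set.univ f)
    (xstar : H) (hmin : ∀ y, f xstar ≤ f y)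
    (t₀ : ℝ) (ht₀ : 0 < t₀)
    (α : ℝ) (hα : 1 ≤ α)
    (β b β' w w' : ℝ → ℝ)
    (hβnn : ∀ t ≥ t₀, 0 ≤ β t)
    (hβ' : ∀ t ≥ t₀, HasDerivAt β (β' t) t)
    (hw : ∀ t ≥ t₀, w t = b t - β' t - β t / t)
    (hw' : ∀ t ≥ t₀, HasDerivAt w (w' t) t)
    (x x' x'' : ℝ → H)
    (hx' : ∀ t ≥ t₀, HasDerivAt x (x' t) t)
    (hx'' : ∀ t ≥ t₀, HasDerivAt x' (x'' t) t)
    (hode : ∀ t ≥ t₀,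
      x'' t + (α / t) • x' t + β t • (fderiv ℝ (gradient f) (x t)) (x' t)
        + b t • gradient f (x t) = 0)
    (hG2 : ∀ t ≥ t₀, β' t + β t / t < b t)
    (hG3 : ∀ t ≥ t₀, t * w' t ≤ (α - 3) * w t) :
    IntegrableOn (fun t => t ^ 2 * β t * w t * ‖gradient f (x t)‖ ^ 2)
      (Set.Ici t₀) := by
  have hgrad : ContDiff ℝ 1 (gradient f) := hf.gradient (by norm_num)
  have htpos : ∀ t ≥ t₀, 0 < t := fun t ht => ht₀.trans_le ht
  have hwpos : ∀ t ≥ t₀, 0 < w t := fun t ht => by linarith [hw t ht, hG2 t ht]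
  have hE := fun t (ht : t ≥ t₀) => hasDerivAt_dinavdEnergy (xstar := xstar) (htpos t ht).ne'
    (hβ' t ht) (hw' t ht) (hx' t ht) (hx'' t ht) (hf.differentiable (by norm_num) _)
    (hgrad.differentiable one_ne_zero _) (hode t ht) (hw t ht)
  refine integrableOn_Ici_of_deriv_le_neg (fun t ht => (hE t ht).differentiableAt)
    (fun t ht => dinavdEnergy_nonneg (hmin _) (hwpos t ht).le) (fun t ht => ?_)
    (fun t ht => by have := hβnn t ht; have := hwpos t ht; positivity) (fun t ht => ?_)
  · have := (hβ' t ht).continuousAt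
    have := (hw' t ht).continuousAt
    have := (hx' t ht).continuousAt
    have := hgrad.continuous
    exact ContinuousAt.continuousWithinAt (by fun_prop)
  · rw [(hE t ht).deriv]
    linarith [dinavd_dissipation_le hconv (hf.differentiable (by norm_num) (x t)) (hmin (x t))
      (htpos t ht).le (hwpos t ht).le hα (hG3 t ht)]

/-- Theorem 2.1 (ii): integrability of the gradients for (DIN-AVD)_{α,β,b}. -/
theorem dinavd_gradient_integrability
    {H : Type*} [NormedAddCommGroup H] [InnerProductSpace ℝ H] [CompleteSpace H]
    (f : H → ℝ) (hf : ContDiff ℝ 2 f) (hconv : ConvexOn ℝ Set.univ f)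
    (xstar : H) (hmin : ∀ y, f xstar ≤ f y)
    (t₀ : ℝ) (ht₀ : 0 < t₀)
    (α : ℝ) (hα : 1 ≤ α)
    (β b β' b' w w' : ℝ → ℝ)
    (hβnn : ∀ t ≥ t₀, 0 ≤ β t) (hbnn : ∀ t ≥ t₀, 0 ≤ b t)
    (hβ' : ∀ t ≥ t₀, HasDerivAt β (β' t) t)
    (hb' : ∀ t ≥ t₀, HasDerivAt b (b' t) t)
    (hw : ∀ t ≥ t₀, w t = b t - β' t - β t / t)
    (hw' : ∀ t ≥ t₀, HasDerivAt w (w' t) t)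
    (x x' x'' : ℝ → H)
    (hx' : ∀ t ≥ t₀, HasDerivAt x (x' t) t)
    (hx'' : ∀ t ≥ t₀, HasDerivAt x' (x'' t) t)
    (hx''cont : ContinuousOn x'' (Set.Ici t₀))
    (hode : ∀ t ≥ t₀,
      x'' t + (α / t) • x' t + β t • (fderiv ℝ (gradient f) (x t)) (x' t)
        + b t • gradient f (x t) = 0)
    (hG2 : ∀ t ≥ t₀, β' t + β t / t < b t)
    (hG3 : ∀ t ≥ t₀, t * w' t ≤ (α - 3) * w t) :
    IntegrableOn (fun t => t ^ 2 * β t * w t * ‖gradient f (x t)‖ ^ 2)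
      (Set.Ici t₀) :=
  dinavd_gradient_integrability_general f hf hconv xstar hmin t₀ ht₀ α hα β b β' w w' hβnn hβ' hw
    hw' x x' x'' hx' hx'' hode hG2 hG3
end

section
/- Let α ≥ 1 and h > 0, and let (x_k)_{k≥0} be a sequence in H satisfying, for every k ≥ 1, the implicit recursion k(x_{k+1} − 2x_k + x_{k−1}) + α(x_{k+1} − x_k) + β_k·h·k·(∇f(x_{k+1}) − ∇f(x_k)) + b_k·h²·k·∇f(x_{k+1}) = 0 (the (IPAHD) algorithm). Set δ_k := h·(b_k·h·k − β_{k+1} − k(β_{k+1} − β_k))·(k+1), and suppose the growth conditions (G2dis): b_k·h·k − β_{k+1} − k(β_{k+1} − β_k) > 0 for all k, and (G3dis): δ_{k+1} − δ_k ≤ (α−1)·δ_k/(k+1) for all k. Then δ_k > 0 and there exists a constant C > 0 such that f(x_k) − min_H f ≤ C/δ_k for all k ≥ 1. -/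
/-!
Lyapunov argument. With `v k = (α - 1) (x k - xstar) + k (x k - x (k - 1)) + h k β k ∇f (x k)`,
the recursion says exactly `v (k + 1) - v k = -(δ k / (k + 1)) ∇f (x (k + 1))`. The gradient
inequality of the convex `f` at `x (k + 1)`, against `xstar` and against `x k`, together with
(G3dis) then makes `E k = δ k (f (x k) - f xstar) + ‖v k‖² / 2` nonincreasing for `k ≥ 1`,
so `δ k (f (x k) - f xstar) ≤ E 1`.
-/

open Set RealInnerProductSpace

theorem ConvexOn.add_fderiv_sub_le {E : Type*} [NormedAddCommGroup E] [NormedSpace ℝ E]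
    {S : Set E} {f : E → ℝ} {f' : E →L[ℝ] ℝ} {p q : E} (hf : ConvexOn ℝ S f)
    (hp : p ∈ S) (hq : q ∈ S) (hd : HasFDerivAt f f' p) : f p + f' (q - p) ≤ f q := by
  set line : ℝ →ᵃ[ℝ] E := AffineMap.lineMap p q
  have hline : ConvexOn ℝ (line ⁻¹' S) (f ∘ line) := hf.comp_affineMap line
  have hderiv : HasDerivAt (f ∘ line) (f' (q - p)) 0 :=
    (AffineMap.lineMap_apply_zero p q (k := ℝ) ▸ hd).comp_hasDerivAt 0
      AffineMap.hasDerivAt_lineMap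
  have := hline.le_slope_of_hasDerivAt (x := 0) (y := 1) (by simpa [line] using hp)
    (by simpa [line] using hq) one_pos hderiv
  simp only [slope_def_field, line, Function.comp_apply, AffineMap.lineMap_apply_zero,
    AffineMap.lineMap_apply_one, sub_zero, div_one] at this
  linarith

theorem ConvexOn.sub_le_inner_gradient {H : Type*} [NormedAddCommGroup H]
    [InnerProductSpace ℝ H] [CompleteSpace H] {S : Set H} {f : H → ℝ} {p q : H}
    (hf : ConvexOn ℝ S f) (hp : p ∈ S) (hq : q ∈ S) (hd : DifferentiableAt ℝ f p) :
    f p - f q ≤ ⟪gradient f p, p - q⟫ := by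
  have := hf.add_fderiv_sub_le hp hq hd.hasFDerivAt
  rw [← inner_gradient_left, ← neg_sub p q, inner_neg_right] at this
  linarith

theorem half_norm_sq_sub_half_norm_sq_le_inner {E : Type*} [NormedAddCommGroup E]
    [InnerProductSpace ℝ E] (a b : E) : ‖a‖ ^ 2 / 2 - ‖b‖ ^ 2 / 2 ≤ ⟪a - b, a⟫ := by
  have h := norm_sub_sq_real a b
  rw [inner_sub_left, real_inner_self_eq_norm_sq, real_inner_comm]
  nlinarith [sq_nonneg ‖a - b‖]

section IPAHD

variable {H : Type*} [NormedAddCommGroup H] [InnerProductSpace ℝ H] [CompleteSpace H]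
  (f : H → ℝ) (xstar : H) (α h : ℝ) (β : ℕ → ℝ) (x : ℕ → H)

noncomputable def ipahdVelocity (k : ℕ) : H :=
  (α - 1) • (x k - xstar) + (k : ℝ) • (x k - x (k - 1)) + (h * k * β k) • gradient f (x k)

noncomputable def ipahdResidual (b : ℕ → ℝ) (k : ℕ) : H :=
  (k : ℝ) • (x (k + 1) - (2 : ℝ) • x k + x (k - 1)) + α • (x (k + 1) - x k)
    + (β k * h * k) • (gradient f (x (k + 1)) - gradient f (x k))
    + (b k * h ^ 2 * k) • gradient f (x (k + 1))

noncomputable def ipahdEnergy (δ : ℕ → ℝ) (k : ℕ) : ℝ :=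
  δ k * (f (x k) - f xstar) + ‖ipahdVelocity f xstar α h β x k‖ ^ 2 / 2

theorem ipahdVelocity_succ_sub {b : ℕ → ℝ} {k : ℕ}
    (hrec : ipahdResidual f α h β x b k = 0) :
    ipahdVelocity f xstar α h β x (k + 1) - ipahdVelocity f xstar α h β x k
      = -(h * (b k * h * k - β (k + 1) - k * (β (k + 1) - β k))) • gradient f (x (k + 1)) := by
  unfold ipahdResidual at hrec
  simp only [ipahdVelocity, Nat.add_sub_cancel]
  push_cast
  linear_combination (norm := module) hrec

theorem le_inner_gradient_ipahdVelocity_succ {k : ℕ} (hconv : ConvexOn ℝ univ f)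
    (hdiff : DifferentiableAt ℝ f (x (k + 1))) (hα : 1 ≤ α) (hh : 0 ≤ h)
    (hβ : 0 ≤ β (k + 1)) :
    (α - 1) * (f (x (k + 1)) - f xstar) + (k + 1) * (f (x (k + 1)) - f (x k))
      ≤ ⟪gradient f (x (k + 1)), ipahdVelocity f xstar α h β x (k + 1)⟫ := by
  set G := gradient f (x (k + 1))
  have hstar := hconv.sub_le_inner_gradient (mem_univ _) (mem_univ xstar) hdiff
  have hprev := hconv.sub_le_inner_gradient (mem_univ _) (mem_univ (x k)) hdiff
  have hG : 0 ≤ h * (k + 1) * β (k + 1) * ⟪G, G⟫ := by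
    have := real_inner_self_nonneg (x := G)
    positivity
  have hexpand : ⟪G, ipahdVelocity f xstar α h β x (k + 1)⟫
      = (α - 1) * ⟪G, x (k + 1) - xstar⟫ + (k + 1) * ⟪G, x (k + 1) - x k⟫
        + h * (k + 1) * β (k + 1) * ⟪G, G⟫ := by
    simp only [ipahdVelocity, Nat.add_sub_cancel, inner_add_right, real_inner_smul_right]
    push_cast
    ring
  have h1 := mul_le_mul_of_nonneg_left hstar (sub_nonneg.2 hα)
  have h2 := mul_le_mul_of_nonneg_left hprev (k.cast_add_one_pos (α := ℝ)).le
  linarith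

theorem ipahdEnergy_succ_le {b δ : ℕ → ℝ} {k : ℕ} (hconv : ConvexOn ℝ univ f)
    (hdiff : DifferentiableAt ℝ f (x (k + 1))) (hmin : f xstar ≤ f (x (k + 1)))
    (hα : 1 ≤ α) (hh : 0 ≤ h) (hβ : 0 ≤ β (k + 1))
    (hrec : ipahdResidual f α h β x b k = 0)
    (hδ : δ k = h * (b k * h * k - β (k + 1) - k * (β (k + 1) - β k)) * (k + 1))
    (hG2 : 0 ≤ b k * h * k - β (k + 1) - (k : ℝ) * (β (k + 1) - β k))
    (hG3 : δ (k + 1) - δ k ≤ (α - 1) * δ k / (k + 1)) :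
    ipahdEnergy f xstar α h β x δ (k + 1) ≤ ipahdEnergy f xstar α h β x δ k := by
  set s := h * (b k * h * k - β (k + 1) - k * (β (k + 1) - β k))
  set v := ipahdVelocity f xstar α h β x
  set G := gradient f (x (k + 1))
  have hs : 0 ≤ s := mul_nonneg hh hG2
  have hδs : (α - 1) * δ k / (k + 1) = (α - 1) * s := by
    rw [hδ]; field_simp
  have hpotential : δ (k + 1) * (f (x (k + 1)) - f xstar) - δ k * (f (x k) - f xstar)
      ≤ s * ((α - 1) * (f (x (k + 1)) - f xstar) + (k + 1) * (f (x (k + 1)) - f (x k))) := by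
    have := mul_le_mul_of_nonneg_right (hδs ▸ hG3) (sub_nonneg.2 hmin)
    rw [hδ] at this ⊢
    linarith
  have hkinetic : ‖v (k + 1)‖ ^ 2 / 2 - ‖v k‖ ^ 2 / 2 ≤ -(s * ⟪G, v (k + 1)⟫) := by
    have := half_norm_sq_sub_half_norm_sq_le_inner (v (k + 1)) (v k)
    rwa [ipahdVelocity_succ_sub f xstar α h β x hrec, real_inner_smul_left, neg_mul] at this
  have hinner := mul_le_mul_of_nonneg_left
    (le_inner_gradient_ipahdVelocity_succ f xstar α h β x hconv hdiff hα hh hβ) hs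
  simp only [ipahdEnergy]
  linarith

end IPAHD

theorem ipahd_value_convergence_rate_general
    {H : Type*} [NormedAddCommGroup H] [InnerProductSpace ℝ H] [CompleteSpace H]
    (f : H → ℝ) (hconv : ConvexOn ℝ Set.univ f) (hdiff : Differentiable ℝ f)
    (xstar : H) (hmin : ∀ y, f xstar ≤ f y)
    (α h : ℝ) (hα : 1 ≤ α) (hh : 0 < h)
    (β b : ℕ → ℝ) (hβnn : ∀ k, 0 ≤ β k)
    (x : ℕ → H)
    (hrec : ∀ k : ℕ, 1 ≤ k →
      (k : ℝ) • (x (k + 1) - (2 : ℝ) • x k + x (k - 1)) + α • (x (k + 1) - x k)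
        + (β k * h * k) • (gradient f (x (k + 1)) - gradient f (x k))
        + (b k * h ^ 2 * k) • gradient f (x (k + 1)) = 0)
    (δ : ℕ → ℝ)
    (hδ : ∀ k : ℕ, δ k = h * (b k * h * k - β (k + 1) - k * (β (k + 1) - β k)) * (k + 1))
    (hG2 : ∀ k : ℕ, 1 ≤ k → 0 < b k * h * k - β (k + 1) - (k : ℝ) * (β (k + 1) - β k))
    (hG3 : ∀ k ≥ 1, δ (k + 1) - δ k ≤ (α - 1) * δ k / (k + 1)) :
    (∀ k ≥ 1, 0 < δ k) ∧
      ∃ C > 0, ∀ k ≥ 1, f (x k) - f xstar ≤ C / δ k := by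
  have hδpos : ∀ k ≥ 1, 0 < δ k := fun k hk => by
    have := hG2 k hk
    rw [hδ k]
    positivity
  set E := ipahdEnergy f xstar α h β x δ
  have hE_le : ∀ k ≥ 1, E k ≤ E 1 := fun k hk => by
    induction k, hk using Nat.le_induction with
    | base => rfl
    | succ n hn ih =>
      exact (ipahdEnergy_succ_le f xstar α h β x hconv (hdiff _) (hmin _) hα hh.le (hβnn _)
        (hrec n hn) (hδ n) (hG2 n hn).le (hG3 n hn)).trans ih
  have hpotential_le : ∀ k, δ k * (f (x k) - f xstar) ≤ E k := fun k =>
    le_add_of_nonneg_right (by positivity)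
  have hE1 : 0 ≤ E 1 :=
    (mul_nonneg (hδpos 1 le_rfl).le (sub_nonneg.2 (hmin _))).trans (hpotential_le 1)
  refine ⟨hδpos, E 1 + 1, by linarith, fun k hk => ?_⟩
  rw [le_div_iff₀ (hδpos k hk), mul_comm]
  linarith [hpotential_le k, hE_le k hk]

/-- Theorem 3.1 (i): convergence rate of the values for (IPAHD). -/
theorem ipahd_value_convergence_rate
    {H : Type*} [NormedAddCommGroup H] [InnerProductSpace ℝ H] [CompleteSpace H]
    (f : H → ℝ) (hconv : ConvexOn ℝ Set.univ f) (hdiff : Differentiable ℝ f)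
    (xstar : H) (hmin : ∀ y, f xstar ≤ f y)
    (α h : ℝ) (hα : 1 ≤ α) (hh : 0 < h)
    (β b : ℕ → ℝ) (hβnn : ∀ k, 0 ≤ β k) (hbnn : ∀ k, 0 ≤ b k)
    (x : ℕ → H)
    (hrec : ∀ k : ℕ, 1 ≤ k →
      (k : ℝ) • (x (k + 1) - (2 : ℝ) • x k + x (k - 1)) + α • (x (k + 1) - x k)
        + (β k * h * k) • (gradient f (x (k + 1)) - gradient f (x k))
        + (b k * h ^ 2 * k) • gradient f (x (k + 1)) = 0)
    (δ : ℕ → ℝ)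
    (hδ : ∀ k : ℕ, δ k = h * (b k * h * k - β (k + 1) - k * (β (k + 1) - β k)) * (k + 1))
    (hG2 : ∀ k : ℕ, 1 ≤ k → 0 < b k * h * k - β (k + 1) - (k : ℝ) * (β (k + 1) - β k))
    (hG3 : ∀ k ≥ 1, δ (k + 1) - δ k ≤ (α - 1) * δ k / (k + 1)) :
    (∀ k ≥ 1, 0 < δ k) ∧
      ∃ C > 0, ∀ k ≥ 1, f (x k) - f xstar ≤ C / δ k :=
  ipahd_value_convergence_rate_general f hconv hdiff xstar hmin α h hα hh β b hβnn x hrec δ hδ hG2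
    hG3
end
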